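/- arXiv:1911.01970 — 3 statements merged into one kernel-verified Lean document; each statement's English description precedes it below -/
import Mathlib

section
/- Let A and H be real symmetric 2×2 matrices and ξ ∈ ℝ². Set E = 2·H·A·ξ, w = tr(A·H), and v = ⟨A·ξ, ξ⟩. Then ⟨A·E, E⟩ = 2·w·⟨A·E, ξ⟩ − 4·v·det(A)·det(H). -/
open Matrix

/-- With `E = 2·H·A·ξ`, `w = tr(A·H)`, `v = ⟨A·ξ, ξ⟩`, one has
`⟨A·E, E⟩ = 2·w·⟨A·E, ξ⟩ − 4·v·det(A)·det(H)` for symmetric `A`, `H`. -/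
theorem stmt4 (A H : Matrix (Fin 2) (Fin 2) ℝ) (hA : A.IsSymm) (hH : H.IsSymm)
    (ξ E : Fin 2 → ℝ) (hE : E = (2 : ℝ) • H.mulVec (A.mulVec ξ))
    (w : ℝ) (hw : w = (A * H).trace)
    (v : ℝ) (hv : v = A.mulVec ξ ⬝ᵥ ξ) :
    A.mulVec E ⬝ᵥ E = 2 * w * (A.mulVec E ⬝ᵥ ξ) - 4 * v * A.det * H.det := by
  have hA01 : A 1 0 = A 0 1 := by
    have := congrFun (congrFun hA 0) 1; simpa [Matrix.transpose_apply] using this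
  have hH01 : H 1 0 = H 0 1 := by
    have := congrFun (congrFun hH 0) 1; simpa [Matrix.transpose_apply] using this
  subst hE hw hv
  simp only [Matrix.mulVec, dotProduct, Fin.sum_univ_two, Matrix.det_fin_two,
    Matrix.trace_fin_two, Matrix.mul_apply, Pi.smul_apply, smul_eq_mul, hA01, hH01]
  ring
end

section
/- Let U ⊆ ℝ² be open, let A : U → Sym₂(ℝ) be a twice continuously differentiable field of symmetric 2×2 matrices, and let p : U → ℝ be three times continuously differentiable. Assume v := ⟨A∇p, ∇p⟩ > 0 on U and set φ = ln v, 𝐄 = 2∇²p·A·∇p, and 𝐆 = v^{-1}(⟨∂₁A ∇p, ∇p⟩, ⟨∂₂A ∇p, ∇p⟩)ᵀ. Then on U: div(A∇φ) = v^{-1}·div(A𝐄) − v^{-2}·⟨A𝐄, 𝐄⟩ − v^{-1}·⟨A𝐆, 𝐄⟩ + div(A𝐆). -/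
open Matrix

/-- Partial derivative in the `i`-th coordinate direction. -/
noncomputable def pd (i : Fin 2) (f : (Fin 2 → ℝ) → ℝ) (x : Fin 2 → ℝ) : ℝ :=
  fderiv ℝ f x (Pi.single i 1)

/-- Gradient of a scalar function on `ℝ²`. -/
noncomputable def grad (f : (Fin 2 → ℝ) → ℝ) (x : Fin 2 → ℝ) : Fin 2 → ℝ :=
  fun i => pd i f x

/-- Divergence of a vector field on `ℝ²`. -/
noncomputable def divg (F : (Fin 2 → ℝ) → Fin 2 → ℝ) (x : Fin 2 → ℝ) : ℝ :=
  ∑ i, pd i (fun y => F y i) x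

/-- Hessian matrix of a scalar function on `ℝ²`. -/
noncomputable def hess (p : (Fin 2 → ℝ) → ℝ) (x : Fin 2 → ℝ) : Matrix (Fin 2) (Fin 2) ℝ :=
  Matrix.of fun i j => pd i (fun y => pd j p y) x

/-!
Differentiating `v = ⟨A∇p, ∇p⟩` and using the symmetry of `A` gives `∇v = 𝐄 + v𝐆`, so
`A∇φ = v⁻¹ A∇v = v⁻¹ A𝐄 + A𝐆`. The product rule `div(v⁻¹ F) = v⁻¹ div F − v⁻² ⟨∇v, F⟩` for
`F = A𝐄`, together with `⟨𝐆, A𝐄⟩ = ⟨A𝐆, 𝐄⟩`, then gives the identity.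
-/

open Filter Topology

theorem Matrix.IsSymm.mulVec_dotProduct_comm {ι R : Type*} [Fintype ι] [CommSemiring R]
    {A : Matrix ι ι R} (hA : A.IsSymm) (u w : ι → R) : A *ᵥ u ⬝ᵥ w = u ⬝ᵥ A *ᵥ w := by
  rw [dotProduct_comm, dotProduct_mulVec, ← mulVec_transpose, hA.eq, dotProduct_comm]

section Regularity

variable {E : Type*} [NormedAddCommGroup E] [NormedSpace ℝ E] {ι κ : Type*} [Fintype ι]
  {n : WithTop ℕ∞} {x : E}

theorem DifferentiableAt.dotProduct {u w : E → ι → ℝ} (hu : DifferentiableAt ℝ u x)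
    (hw : DifferentiableAt ℝ w x) : DifferentiableAt ℝ (fun y => u y ⬝ᵥ w y) x := by
  have := differentiableAt_pi.1 hu
  have := differentiableAt_pi.1 hw
  show DifferentiableAt ℝ (fun y => ∑ i, u y i * w y i) x
  fun_prop

theorem DifferentiableAt.mulVec {A : E → Matrix κ ι ℝ} {u : E → ι → ℝ}
    (hA : ∀ k l, DifferentiableAt ℝ (fun y => A y k l) x) (hu : DifferentiableAt ℝ u x) :
    DifferentiableAt ℝ (fun y => A y *ᵥ u y) x :=
  differentiableAt_pi.2 fun k => (differentiableAt_pi.2 (hA k)).dotProduct hu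

theorem ContDiffAt.dotProduct {u w : E → ι → ℝ} (hu : ContDiffAt ℝ n u x)
    (hw : ContDiffAt ℝ n w x) : ContDiffAt ℝ n (fun y => u y ⬝ᵥ w y) x := by
  have := contDiffAt_pi.1 hu
  have := contDiffAt_pi.1 hw
  show ContDiffAt ℝ n (fun y => ∑ i, u y i * w y i) x
  fun_prop

theorem ContDiffAt.mulVec [Fintype κ] {A : E → Matrix κ ι ℝ} {u : E → ι → ℝ}
    (hA : ∀ k l, ContDiffAt ℝ n (fun y => A y k l) x) (hu : ContDiffAt ℝ n u x) :
    ContDiffAt ℝ n (fun y => A y *ᵥ u y) x :=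
  contDiffAt_pi.2 fun k => (contDiffAt_pi.2 (hA k)).dotProduct hu

end Regularity

noncomputable def pdVec {ι : Type*} (i : Fin 2) (u : (Fin 2 → ℝ) → ι → ℝ) (x : Fin 2 → ℝ) :
    ι → ℝ :=
  fun k => pd i (fun y => u y k) x

noncomputable def pdMat {κ ι : Type*} (i : Fin 2) (A : (Fin 2 → ℝ) → Matrix κ ι ℝ)
    (x : Fin 2 → ℝ) : Matrix κ ι ℝ :=
  Matrix.of fun k l => pd i (fun y => A y k l) x

section PartialDerivatives

variable {ι : Type*} {f g : (Fin 2 → ℝ) → ℝ} {x : Fin 2 → ℝ} {i : Fin 2}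

theorem pd_congr (h : f =ᶠ[𝓝 x] g) : pd i f x = pd i g x := by
  rw [pd, pd, h.fderiv_eq]

theorem pd_add (hf : DifferentiableAt ℝ f x) (hg : DifferentiableAt ℝ g x) :
    pd i (fun y => f y + g y) x = pd i f x + pd i g x := by
  simp [pd, fderiv_fun_add hf hg]

theorem pd_mul (hf : DifferentiableAt ℝ f x) (hg : DifferentiableAt ℝ g x) :
    pd i (fun y => f y * g y) x = pd i f x * g x + f x * pd i g x := by
  simp [pd, fderiv_fun_mul hf hg]
  ring

theorem pd_sum {s : Finset ι} {F : ι → (Fin 2 → ℝ) → ℝ}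
    (hF : ∀ k ∈ s, DifferentiableAt ℝ (F k) x) :
    pd i (fun y => ∑ k ∈ s, F k y) x = ∑ k ∈ s, pd i (F k) x := by
  simp [pd, fderiv_fun_sum hF]

theorem pd_inv (hf : DifferentiableAt ℝ f x) (h0 : f x ≠ 0) :
    pd i (fun y => (f y)⁻¹) x = -(f x ^ 2)⁻¹ * pd i f x := by
  have h : HasFDerivAt (fun y => (f y)⁻¹) (-(f x ^ 2)⁻¹ • fderiv ℝ f x) x :=
    (hasDerivAt_inv h0).comp_hasFDerivAt x hf.hasFDerivAt
  simp [pd, h.fderiv]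

theorem pd_log (hf : DifferentiableAt ℝ f x) (h0 : f x ≠ 0) :
    pd i (fun y => Real.log (f y)) x = (f x)⁻¹ * pd i f x := by
  simp [pd, (hf.hasFDerivAt.log h0).fderiv]

theorem pd_dotProduct [Fintype ι] {u w : (Fin 2 → ℝ) → ι → ℝ} (hu : DifferentiableAt ℝ u x)
    (hw : DifferentiableAt ℝ w x) :
    pd i (fun y => u y ⬝ᵥ w y) x = pdVec i u x ⬝ᵥ w x + u x ⬝ᵥ pdVec i w x := by
  have hu' := differentiableAt_pi.1 hu
  have hw' := differentiableAt_pi.1 hw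
  rw [show (fun y => u y ⬝ᵥ w y) = fun y => ∑ k, u y k * w y k from rfl,
    pd_sum (F := fun k y => u y k * w y k) fun k _ => (hu' k).mul (hw' k)]
  simp only [pd_mul (hu' _) (hw' _), Finset.sum_add_distrib, dotProduct, pdVec]

theorem pdVec_mulVec [Fintype ι] {κ : Type*} {A : (Fin 2 → ℝ) → Matrix κ ι ℝ}
    {u : (Fin 2 → ℝ) → ι → ℝ}
    (hA : ∀ k l, DifferentiableAt ℝ (fun y => A y k l) x) (hu : DifferentiableAt ℝ u x) :
    pdVec i (fun y => A y *ᵥ u y) x = pdMat i A x *ᵥ u x + A x *ᵥ pdVec i u x := by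
  funext k
  exact pd_dotProduct (differentiableAt_pi.2 (hA k)) hu

theorem grad_mulVec_dotProduct_self [Fintype ι] {A : (Fin 2 → ℝ) → Matrix ι ι ℝ}
    {u : (Fin 2 → ℝ) → ι → ℝ} (hA : ∀ k l, DifferentiableAt ℝ (fun y => A y k l) x)
    (hsymm : (A x).IsSymm) (hu : DifferentiableAt ℝ u x) :
    grad (fun y => A y *ᵥ u y ⬝ᵥ u y) x =
      fun i => pdMat i A x *ᵥ u x ⬝ᵥ u x + 2 * (pdVec i u x ⬝ᵥ A x *ᵥ u x) := by
  funext i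
  rw [grad, pd_dotProduct (DifferentiableAt.mulVec hA hu) hu, pdVec_mulVec hA hu, add_dotProduct,
    hsymm.mulVec_dotProduct_comm, dotProduct_comm (A x *ᵥ u x)]
  ring

theorem grad_mulVec_grad_dotProduct_grad {A : (Fin 2 → ℝ) → Matrix (Fin 2) (Fin 2) ℝ}
    {p : (Fin 2 → ℝ) → ℝ} (hA : ∀ k l, DifferentiableAt ℝ (fun y => A y k l) x)
    (hsymm : (A x).IsSymm) (hp : DifferentiableAt ℝ (grad p) x) :
    grad (fun y => A y *ᵥ grad p y ⬝ᵥ grad p y) x =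
      (2 : ℝ) • hess p x *ᵥ A x *ᵥ grad p x + fun i => pdMat i A x *ᵥ grad p x ⬝ᵥ grad p x := by
  rw [grad_mulVec_dotProduct_self hA hsymm hp, add_comm]
  rfl

theorem grad_inv (hf : DifferentiableAt ℝ f x) (h0 : f x ≠ 0) :
    grad (fun y => (f y)⁻¹) x = -(f x ^ 2)⁻¹ • grad f x :=
  funext fun _ => pd_inv hf h0

theorem grad_log (hf : DifferentiableAt ℝ f x) (h0 : f x ≠ 0) :
    grad (fun y => Real.log (f y)) x = (f x)⁻¹ • grad f x :=
  funext fun _ => pd_log hf h0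

theorem divg_congr {F H : (Fin 2 → ℝ) → Fin 2 → ℝ} (h : F =ᶠ[𝓝 x] H) : divg F x = divg H x :=
  Finset.sum_congr rfl fun k _ => pd_congr (h.fun_comp (· k))

theorem divg_add {F H : (Fin 2 → ℝ) → Fin 2 → ℝ} (hF : DifferentiableAt ℝ F x)
    (hH : DifferentiableAt ℝ H x) : divg (fun y => F y + H y) x = divg F x + divg H x := by
  simp only [divg, Pi.add_apply,
    pd_add (differentiableAt_pi.1 hF _) (differentiableAt_pi.1 hH _), Finset.sum_add_distrib]

theorem divg_smul {F : (Fin 2 → ℝ) → Fin 2 → ℝ} (hf : DifferentiableAt ℝ f x)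
    (hF : DifferentiableAt ℝ F x) :
    divg (fun y => f y • F y) x = f x * divg F x + grad f x ⬝ᵥ F x := by
  simp only [divg, Pi.smul_apply, smul_eq_mul, pd_mul hf (differentiableAt_pi.1 hF _),
    Finset.sum_add_distrib, Finset.mul_sum, dotProduct, grad]
  ring

theorem contDiffAt_pd {n m : WithTop ℕ∞} (hf : ContDiffAt ℝ n f x) (hmn : m + 1 ≤ n)
    (i : Fin 2) : ContDiffAt ℝ m (pd i f) x :=
  (hf.fderiv_right hmn).clm_apply contDiffAt_const

theorem contDiffAt_grad {n m : WithTop ℕ∞} (hf : ContDiffAt ℝ n f x) (hmn : m + 1 ≤ n) :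
    ContDiffAt ℝ m (grad f) x :=
  contDiffAt_pi.2 fun i => contDiffAt_pd hf hmn i

theorem contDiffAt_hess {n m : WithTop ℕ∞} {p : (Fin 2 → ℝ) → ℝ} (hp : ContDiffAt ℝ n p x)
    (hmn : m + 2 ≤ n) (k l : Fin 2) : ContDiffAt ℝ m (fun y => hess p y k l) x :=
  have hmn' : m + 1 + 1 ≤ n := by rwa [add_assoc, one_add_one_eq_two]
  contDiffAt_pd (contDiffAt_pd hp hmn' l) le_rfl k

theorem contDiffAt_pdMat {κ : Type*} {n m : WithTop ℕ∞} {A : (Fin 2 → ℝ) → Matrix κ ι ℝ}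
    (hA : ∀ k l, ContDiffAt ℝ n (fun y => A y k l) x) (hmn : m + 1 ≤ n) (i : Fin 2) (k : κ)
    (l : ι) : ContDiffAt ℝ m (fun y => pdMat i A y k l) x :=
  contDiffAt_pd (hA k l) hmn i

end PartialDerivatives

theorem divg_mulVec_grad_log {A : (Fin 2 → ℝ) → Matrix (Fin 2) (Fin 2) ℝ}
    {v : (Fin 2 → ℝ) → ℝ} {E G : (Fin 2 → ℝ) → Fin 2 → ℝ} {x : Fin 2 → ℝ}
    (hv : ∀ᶠ y in 𝓝 x, DifferentiableAt ℝ v y) (hv0 : ∀ᶠ y in 𝓝 x, v y ≠ 0)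
    (hgrad : ∀ᶠ y in 𝓝 x, grad v y = E y + v y • G y) (hsymm : (A x).IsSymm)
    (hAE : DifferentiableAt ℝ (fun y => A y *ᵥ E y) x)
    (hAG : DifferentiableAt ℝ (fun y => A y *ᵥ G y) x) :
    divg (fun y => A y *ᵥ grad (fun z => Real.log (v z)) y) x =
      (v x)⁻¹ * divg (fun y => A y *ᵥ E y) x
        - ((v x)⁻¹) ^ 2 * (A x *ᵥ E x ⬝ᵥ E x)
        - (v x)⁻¹ * (A x *ᵥ G x ⬝ᵥ E x)
        + divg (fun y => A y *ᵥ G y) x := by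
  have hAgrad : (fun y => A y *ᵥ grad (fun z => Real.log (v z)) y) =ᶠ[𝓝 x]
      fun y => (v y)⁻¹ • (A y *ᵥ E y) + A y *ᵥ G y := by
    filter_upwards [hv, hv0, hgrad] with y hdy hy0 hgy
    rw [grad_log hdy hy0, hgy, smul_add, inv_smul_smul₀ hy0, mulVec_add, mulVec_smul]
  have hdv := hv.self_of_nhds
  have hvx := hv0.self_of_nhds
  have hdvinv : DifferentiableAt ℝ (fun y => (v y)⁻¹) x := hdv.inv hvx
  calc divg (fun y => A y *ᵥ grad (fun z => Real.log (v z)) y) x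
      = divg (fun y => (v y)⁻¹ • (A y *ᵥ E y) + A y *ᵥ G y) x := divg_congr hAgrad
    _ = (v x)⁻¹ * divg (fun y => A y *ᵥ E y) x
          - (v x ^ 2)⁻¹ * ((E x + v x • G x) ⬝ᵥ A x *ᵥ E x)
          + divg (fun y => A y *ᵥ G y) x := by
        rw [divg_add (F := fun y => (v y)⁻¹ • (A y *ᵥ E y)) (hdvinv.smul hAE) hAG,
          divg_smul hdvinv hAE, grad_inv hdv hvx, hgrad.self_of_nhds, smul_dotProduct,
          smul_eq_mul]
        ring
    _ = _ := by
        rw [add_dotProduct, smul_dotProduct, smul_eq_mul, dotProduct_comm (E x),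
          ← hsymm.mulVec_dotProduct_comm]
        field_simp
        ring

/-- The identity
`div(A∇φ) = v⁻¹ div(A𝐄) − v⁻² ⟨A𝐄, 𝐄⟩ − v⁻¹ ⟨A𝐆, 𝐄⟩ + div(A𝐆)` for
`φ = ln v`, `v = ⟨A∇p, ∇p⟩ > 0`, `𝐄 = 2∇²p·A·∇p`,
`𝐆 = v⁻¹(⟨∂₁A ∇p, ∇p⟩, ⟨∂₂A ∇p, ∇p⟩)ᵀ`. -/
theorem stmt9 (U : Set (Fin 2 → ℝ)) (hU : IsOpen U)
    (A : (Fin 2 → ℝ) → Matrix (Fin 2) (Fin 2) ℝ)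
    (hAsymm : ∀ x ∈ U, (A x).IsSymm)
    (hA : ∀ i j, ContDiffOn ℝ 2 (fun x => A x i j) U)
    (p : (Fin 2 → ℝ) → ℝ) (hp : ContDiffOn ℝ 3 p U)
    (v : (Fin 2 → ℝ) → ℝ) (hv : v = fun y => (A y).mulVec (grad p y) ⬝ᵥ grad p y)
    (hvpos : ∀ x ∈ U, 0 < v x)
    (φ : (Fin 2 → ℝ) → ℝ) (hφ : φ = fun y => Real.log (v y))
    (E : (Fin 2 → ℝ) → Fin 2 → ℝ)
    (hE : E = fun y => (2 : ℝ) • (hess p y).mulVec ((A y).mulVec (grad p y)))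
    (G : (Fin 2 → ℝ) → Fin 2 → ℝ)
    (hG : G = fun y => (v y)⁻¹ •
      fun i => (Matrix.of fun k l => pd i (fun z => A z k l) y).mulVec (grad p y) ⬝ᵥ grad p y)
    (x : Fin 2 → ℝ) (hx : x ∈ U) :
    divg (fun y => (A y).mulVec (grad φ y)) x =
      (v x)⁻¹ * divg (fun y => (A y).mulVec (E y)) x
        - ((v x)⁻¹) ^ 2 * ((A x).mulVec (E x) ⬝ᵥ E x)
        - (v x)⁻¹ * ((A x).mulVec (G x) ⬝ᵥ E x)
        + divg (fun y => (A y).mulVec (G y)) x := by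
  subst hφ
  have hUx := hU.mem_nhds hx
  have hA2 : ∀ y ∈ U, ∀ k l, ContDiffAt ℝ 2 (fun z => A z k l) y :=
    fun y hy k l => (hA k l).contDiffAt (hU.mem_nhds hy)
  have hA1 : ∀ y ∈ U, ∀ k l, ContDiffAt ℝ 1 (fun z => A z k l) y :=
    fun y hy k l => (hA2 y hy k l).of_le one_le_two
  have hgp : ∀ y ∈ U, ContDiffAt ℝ 1 (grad p) y :=
    fun y hy => contDiffAt_grad (hp.contDiffAt (hU.mem_nhds hy)) (by norm_num)
  have hvC : ∀ y ∈ U, ContDiffAt ℝ 1 v y := fun y hy => by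
    rw [hv]
    exact (ContDiffAt.mulVec (hA1 y hy) (hgp y hy)).dotProduct (hgp y hy)
  have hgrad_v : ∀ y ∈ U, grad v y = E y + v y • G y := by
    intro y hy
    have h := grad_mulVec_grad_dotProduct_grad
      (fun k l => (hA1 y hy k l).differentiableAt one_ne_zero) (hAsymm y hy)
      ((hgp y hy).differentiableAt one_ne_zero)
    rw [← hv] at h
    rw [h, hE, hG, smul_inv_smul₀ (hvpos y hy).ne']
    rfl
  have hEx : ContDiffAt ℝ 1 E x := by
    rw [hE]
    exact (ContDiffAt.mulVec (contDiffAt_hess (hp.contDiffAt hUx) (by norm_num))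
      (ContDiffAt.mulVec (hA1 x hx) (hgp x hx))).const_smul (2 : ℝ)
  have hGx : ContDiffAt ℝ 1 G x := by
    rw [hG]
    exact ((hvC x hx).inv (hvpos x hx).ne').smul (contDiffAt_pi.2 fun i =>
      (ContDiffAt.mulVec (contDiffAt_pdMat (hA2 x hx) le_rfl i) (hgp x hx)).dotProduct (hgp x hx))
  exact divg_mulVec_grad_log
    (eventually_of_mem hUx fun y hy => (hvC y hy).differentiableAt one_ne_zero)
    (eventually_of_mem hUx fun y hy => (hvpos y hy).ne') (eventually_of_mem hUx hgrad_v)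
    (hAsymm x hx) ((ContDiffAt.mulVec (hA1 x hx) hEx).differentiableAt one_ne_zero)
    ((ContDiffAt.mulVec (hA1 x hx) hGx).differentiableAt one_ne_zero)
end

section
/- Let K > 0 and define K_n = K·(1 − 1/2^{n+1}) for integers n ≥ 0. Then for every n ≥ 0 and every real v with v ≥ K_{n+1}, one has (√v − √(K_n))² ≥ (v − K_{n+1})/2^{n+4} and (√v − √(K_n))² ≥ v/2^{2(n+3)}. -/
/-- With `K_n = K(1 − 1/2^{n+1})`, for every `v ≥ K_{n+1}` one has
`(√v − √K_n)² ≥ (v − K_{n+1})/2^{n+4}` and `(√v − √K_n)² ≥ v/2^{2(n+3)}`. -/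
theorem stmt13 (K : ℝ) (hK : 0 < K) (Kseq : ℕ → ℝ)
    (hKseq : ∀ n, Kseq n = K * (1 - 1 / 2 ^ (n + 1)))
    (n : ℕ) (v : ℝ) (hv : Kseq (n + 1) ≤ v) :
    (v - Kseq (n + 1)) / 2 ^ (n + 4) ≤ (Real.sqrt v - Real.sqrt (Kseq n)) ^ 2 ∧
      v / 2 ^ (2 * (n + 3)) ≤ (Real.sqrt v - Real.sqrt (Kseq n)) ^ 2 := by
  set a : ℝ := 2 ^ (n + 1) with ha
  have ha2 : (2:ℝ) ≤ a := by
    rw [ha]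
    calc (2:ℝ) = 2 ^ 1 := by norm_num
    _ ≤ 2 ^ (n + 1) := by apply pow_le_pow_right₀ (by norm_num); omega
  have hapos : (0:ℝ) < a := by linarith
  have hKn : Kseq n = K * (1 - 1 / a) := by rw [hKseq]
  have hKn1 : Kseq (n + 1) = K * (1 - 1 / (2 * a)) := by
    rw [hKseq, ha]; ring_nf
  have hKnpos : 0 < Kseq n := by
    rw [hKn]
    have : 1 / a ≤ 1 / 2 := by
      apply one_div_le_one_div_of_le <;> linarith
    nlinarith
  have hKn_le : Kseq n ≤ Kseq (n + 1) := by
    rw [hKn, hKn1]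
    have h1 : 1 / (2 * a) ≤ 1 / a := by
      apply one_div_le_one_div_of_le <;> linarith
    nlinarith
  have hvpos : 0 < v := lt_of_lt_of_le (by linarith) hv
  -- key algebraic inequality : v - Kseq n ≥ v / (2 * a)
  have hkey : v / (2 * a) ≤ v - Kseq n := by
    rw [hKn]
    rw [div_le_iff₀ (by linarith)]
    have hv' : K * (1 - 1 / (2 * a)) ≤ v := by rw [← hKn1]; exact hv
    have h1 : K * (2 * a - 1) ≤ v * (2 * a) := by
      have := mul_le_mul_of_nonneg_right hv' (le_of_lt (by linarith : (0:ℝ) < 2 * a))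
      calc K * (2 * a - 1) = K * (1 - 1 / (2 * a)) * (2 * a) := by
            field_simp
      _ ≤ v * (2 * a) := this
    have h2 : K * (1 - 1 / a) * (2 * a) = K * (2 * a - 2) := by field_simp
    nlinarith
  set s := Real.sqrt v with hs
  set t := Real.sqrt (Kseq n) with ht
  have hs2 : s ^ 2 = v := Real.sq_sqrt hvpos.le
  have ht2 : t ^ 2 = Kseq n := Real.sq_sqrt hKnpos.le
  have hspos : 0 < s := Real.sqrt_pos.mpr hvpos
  have hts : t ≤ s := Real.sqrt_le_sqrt (by linarith)
  have htpos : 0 ≤ t := Real.sqrt_nonneg _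
  -- (s - t) ≥ (v - Kseq n) / (2 s)
  have hmain : (v - Kseq n) / (2 * s) ≤ s - t := by
    rw [div_le_iff₀ (by linarith)]
    nlinarith [sq_nonneg (s - t)]
  have hst : 0 ≤ s - t := by linarith
  have hsq : ((v - Kseq n) / (2 * s)) ^ 2 ≤ (s - t) ^ 2 := by
    exact pow_le_pow_left₀ (div_nonneg (by linarith) (by linarith)) hmain 2
  have hsq' : (v - Kseq n) ^ 2 / (4 * v) ≤ (s - t) ^ 2 := by
    calc (v - Kseq n) ^ 2 / (4 * v) = ((v - Kseq n) / (2 * s)) ^ 2 := by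
          rw [div_pow]; rw [mul_pow]; rw [hs2]; norm_num
    _ ≤ (s - t) ^ 2 := hsq
  have hvK : 0 ≤ v - Kseq n := by linarith
  have hvK1 : 0 ≤ v - Kseq (n + 1) := by linarith
  constructor
  · have h24 : (2:ℝ) ^ (n + 4) = 8 * a := by rw [ha]; ring
    rw [h24]
    have : (v - Kseq (n + 1)) / (8 * a) ≤ (v - Kseq n) ^ 2 / (4 * v) := by
      rw [div_le_div_iff₀ (by linarith) (by linarith)]
      have h1 : v / (2 * a) * (v - Kseq (n + 1)) ≤ (v - Kseq n) * (v - Kseq n) := by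
        apply mul_le_mul hkey (by linarith) hvK1 hvK
      have h2 : v / (2 * a) * (v - Kseq (n + 1)) * (8 * a) = (v - Kseq (n + 1)) * (4 * v) := by
        field_simp; ring
      nlinarith
    linarith
  · have h26 : (2:ℝ) ^ (2 * (n + 3)) = 16 * a ^ 2 := by rw [ha, ← pow_mul]; ring_nf
    rw [h26]
    have h1 : (v / (2 * a)) ^ 2 ≤ (v - Kseq n) ^ 2 := by
      apply pow_le_pow_left₀ (by positivity) hkey
    have h2 : v / (16 * a ^ 2) ≤ (v / (2 * a)) ^ 2 / (4 * v) := by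
      rw [div_pow, div_div]
      rw [div_le_div_iff₀ (by positivity) (by positivity)]
      ring_nf
      nlinarith
    have h3 : (v / (2 * a)) ^ 2 / (4 * v) ≤ (v - Kseq n) ^ 2 / (4 * v) := by
      gcongr
    linarith
end
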